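/- Define first-order differential operators acting on smooth complex-valued functions of $(q_1,q_2)\in\mathbb{R}^2$ (with parameters $\hbar\neq 0$ and $j\in\mathbb{R}$): $\ell_1 = \tfrac{i}{\hbar}q_1$, $\ell_2 = -\tfrac{i}{\hbar}q_2$, $\ell_3 = q_1\partial_{q_2}$, $\ell_4 = q_1\partial_{q_1} - q_2\partial_{q_2}$, $\ell_5 = q_2\partial_{q_1} + \tfrac{i}{\hbar}\tfrac{j}{q_1^2}$ (the latter on functions defined for $q_1\neq 0$). Then these operators satisfy the commutation relations of the Lie algebra with nonzero brackets $[e_1,e_4]=-e_1$, $[e_1,e_5]=e_2$, $[e_2,e_3]=e_1$, $[e_2,e_4]=e_2$, $[e_3,e_4]=-2e_3$, $[e_3,e_5]=e_4$, $[e_4,e_5]=-2e_5$; i.e. $[\ell_1,\ell_4]=-\ell_1$, $[\ell_1,\ell_5]=\ell_2$, $[\ell_2,\ell_3]=\ell_1$, $[\ell_2,\ell_4]=\ell_2$, $[\ell_3,\ell_4]=-2\ell_3$, $[\ell_3,\ell_5]=\ell_4$, $[\ell_4,\ell_5]=-2\ell_5$, and all other commutators of the $\ell_A$ vanish. -/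

import Mathlib

open Complex

/-- Partial derivative `∂/∂qᵢ` of a complex-valued function on `ℝ²`. -/
noncomputable def pd2 (i : Fin 2) (φ : (Fin 2 → ℝ) → ℂ) (x : Fin 2 → ℝ) : ℂ :=
  fderiv ℝ φ x (Pi.single i 1)

/-- The operators `ℓ₁,…,ℓ₅` of the λ-representation (indices shifted to `0,…,4`):
`ℓ₁ = (i/ℏ)q₁`, `ℓ₂ = -(i/ℏ)q₂`, `ℓ₃ = q₁∂_{q₂}`, `ℓ₄ = q₁∂_{q₁} - q₂∂_{q₂}`,
`ℓ₅ = q₂∂_{q₁} + (i/ℏ)(j/q₁²)`. -/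
noncomputable def Lop (ℏ j : ℝ) : Fin 5 → ((Fin 2 → ℝ) → ℂ) → (Fin 2 → ℝ) → ℂ
  | 0 => fun φ x => (Complex.I / ℏ) * (x 0 : ℂ) * φ x
  | 1 => fun φ x => -((Complex.I / ℏ) * (x 1 : ℂ)) * φ x
  | 2 => fun φ x => (x 0 : ℂ) * pd2 1 φ x
  | 3 => fun φ x => (x 0 : ℂ) * pd2 0 φ x - (x 1 : ℂ) * pd2 1 φ x
  | 4 => fun φ x => (x 1 : ℂ) * pd2 0 φ x + (Complex.I / ℏ) * ((j : ℂ) / (x 0 : ℂ)^2) * φ x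

section Helpers

/-- The coordinate function `y ↦ (y k : ℂ)` as a continuous ℝ-linear map. -/
noncomputable def coordC (k : Fin 2) : (Fin 2 → ℝ) →L[ℝ] ℂ :=
  Complex.ofRealCLM.comp (ContinuousLinearMap.proj k)

lemma diff_coord (k : Fin 2) (x : Fin 2 → ℝ) :
    DifferentiableAt ℝ (fun y : Fin 2 → ℝ => ((y k : ℝ) : ℂ)) x :=
  (coordC k).differentiableAt

lemma pd2_coord (i k : Fin 2) (x : Fin 2 → ℝ) :
    pd2 i (fun y => ((y k : ℝ) : ℂ)) x = if k = i then 1 else 0 := by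
  have h : (fun y : Fin 2 → ℝ => ((y k : ℝ) : ℂ)) = coordC k := rfl
  rw [pd2, h, (coordC k).fderiv]
  simp [coordC, Pi.single_apply, apply_ite (fun t : ℝ => (t : ℂ))]

lemma pd2_mul (i : Fin 2) {f g : (Fin 2 → ℝ) → ℂ} {x : Fin 2 → ℝ}
    (hf : DifferentiableAt ℝ f x) (hg : DifferentiableAt ℝ g x) :
    pd2 i (fun y => f y * g y) x = pd2 i f x * g x + f x * pd2 i g x := by
  unfold pd2
  rw [fderiv_fun_mul hf hg]
  simp only [ContinuousLinearMap.add_apply, ContinuousLinearMap.smul_apply, smul_eq_mul]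
  ring

lemma pd2_const_mul (i : Fin 2) (c : ℂ) {f : (Fin 2 → ℝ) → ℂ} {x : Fin 2 → ℝ}
    (hf : DifferentiableAt ℝ f x) :
    pd2 i (fun y => c * f y) x = c * pd2 i f x := by
  unfold pd2
  rw [fderiv_const_mul hf c]
  simp

lemma pd2_add (i : Fin 2) {f g : (Fin 2 → ℝ) → ℂ} {x : Fin 2 → ℝ}
    (hf : DifferentiableAt ℝ f x) (hg : DifferentiableAt ℝ g x) :
    pd2 i (fun y => f y + g y) x = pd2 i f x + pd2 i g x := by
  unfold pd2; rw [fderiv_fun_add hf hg]; simp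

lemma pd2_sub (i : Fin 2) {f g : (Fin 2 → ℝ) → ℂ} {x : Fin 2 → ℝ}
    (hf : DifferentiableAt ℝ f x) (hg : DifferentiableAt ℝ g x) :
    pd2 i (fun y => f y - g y) x = pd2 i f x - pd2 i g x := by
  unfold pd2; rw [fderiv_fun_sub hf hg]; simp

lemma pd2_neg (i : Fin 2) (f : (Fin 2 → ℝ) → ℂ) (x : Fin 2 → ℝ) :
    pd2 i (fun y => -f y) x = -pd2 i f x := by
  unfold pd2; rw [fderiv_fun_neg]; simp

lemma pd2_coord_mul (i k : Fin 2) {φ : (Fin 2 → ℝ) → ℂ} {x : Fin 2 → ℝ}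
    (hφ : DifferentiableAt ℝ φ x) :
    pd2 i (fun y => ((y k : ℝ) : ℂ) * φ y) x
      = (if k = i then 1 else 0) * φ x + (x k : ℂ) * pd2 i φ x := by
  rw [pd2_mul i (diff_coord k x) hφ, pd2_coord]

lemma pd2_cmul_coord_mul (i : Fin 2) (c : ℂ) (k : Fin 2) {φ : (Fin 2 → ℝ) → ℂ}
    {x : Fin 2 → ℝ} (hφ : DifferentiableAt ℝ φ x) :
    pd2 i (fun y => c * ((y k : ℝ) : ℂ) * φ y) x
      = c * ((if k = i then 1 else 0) * φ x + (x k : ℂ) * pd2 i φ x) := by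
  have h : (fun y : Fin 2 → ℝ => c * ((y k : ℝ) : ℂ) * φ y)
      = fun y => c * (((y k : ℝ) : ℂ) * φ y) := by
    funext y; ring
  rw [h, pd2_const_mul i c (f := fun y => ((y k : ℝ) : ℂ) * φ y) ((diff_coord k x).mul hφ), pd2_coord_mul i k hφ]

lemma pd2_neg_cmul_coord_mul (i : Fin 2) (c : ℂ) (k : Fin 2) {φ : (Fin 2 → ℝ) → ℂ}
    {x : Fin 2 → ℝ} (hφ : DifferentiableAt ℝ φ x) :
    pd2 i (fun y => -(c * ((y k : ℝ) : ℂ)) * φ y) x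
      = -(c * ((if k = i then 1 else 0) * φ x + (x k : ℂ) * pd2 i φ x)) := by
  have h : (fun y : Fin 2 → ℝ => -(c * ((y k : ℝ) : ℂ)) * φ y)
      = fun y => -(c * (((y k : ℝ) : ℂ) * φ y)) := by
    funext y; ring
  rw [h, pd2_neg, pd2_const_mul i c (f := fun y => ((y k : ℝ) : ℂ) * φ y) ((diff_coord k x).mul hφ), pd2_coord_mul i k hφ]

lemma diff_sq (x : Fin 2 → ℝ) :
    DifferentiableAt ℝ (fun y : Fin 2 → ℝ => ((y 0 : ℝ) : ℂ) ^ 2) x :=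
  (diff_coord 0 x).pow 2

lemma pd2_sq (i : Fin 2) (x : Fin 2 → ℝ) :
    pd2 i (fun y => ((y 0 : ℝ) : ℂ) ^ 2) x
      = (if (0 : Fin 2) = i then 1 else 0) * (2 * ((x 0 : ℝ) : ℂ)) := by
  have h : (fun y : Fin 2 → ℝ => ((y 0 : ℝ) : ℂ) ^ 2)
      = fun y => ((y 0 : ℝ) : ℂ) * ((y 0 : ℝ) : ℂ) := by
    funext y; ring
  rw [h, pd2_mul i (diff_coord 0 x) (diff_coord 0 x), pd2_coord]
  ring

lemma pd2_invsq (i : Fin 2) {x : Fin 2 → ℝ} (hx : x 0 ≠ 0) :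
    pd2 i (fun y => (((y 0 : ℝ) : ℂ) ^ 2)⁻¹) x
      = -((((x 0 : ℝ) : ℂ) ^ 2)⁻¹ * ((if (0 : Fin 2) = i then 1 else 0) * (2 * ((x 0 : ℝ) : ℂ)))
          * (((x 0 : ℝ) : ℂ) ^ 2)⁻¹) := by
  have hx' : ((x 0 : ℝ) : ℂ) ≠ 0 := Complex.ofReal_ne_zero.mpr hx
  have hne : ((x 0 : ℝ) : ℂ) ^ 2 ≠ 0 := pow_ne_zero 2 hx'
  have hdi : DifferentiableAt ℝ (Inv.inv : ℂ → ℂ) (((x 0 : ℝ) : ℂ) ^ 2) :=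
    differentiableAt_inv hne
  have hcomp : (fun y : Fin 2 → ℝ => (((y 0 : ℝ) : ℂ) ^ 2)⁻¹)
      = (Inv.inv : ℂ → ℂ) ∘ (fun y : Fin 2 → ℝ => ((y 0 : ℝ) : ℂ) ^ 2) := rfl
  have := pd2_sq i x
  rw [pd2] at this ⊢
  rw [hcomp, fderiv_comp x hdi (diff_sq x), ContinuousLinearMap.comp_apply,
    fderiv_inv' (𝕜 := ℝ) hne, this]
  simp [ContinuousLinearMap.mulLeftRight_apply]

lemma diff_gfun (c : ℂ) (j : ℝ) {x : Fin 2 → ℝ} (hx : x 0 ≠ 0) :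
    DifferentiableAt ℝ (fun y : Fin 2 → ℝ => c * ((j : ℂ) / ((y 0 : ℝ) : ℂ) ^ 2)) x := by
  have hx' : ((x 0 : ℝ) : ℂ) ≠ 0 := Complex.ofReal_ne_zero.mpr hx
  have hne : ((x 0 : ℝ) : ℂ) ^ 2 ≠ 0 := pow_ne_zero 2 hx'
  have h : (fun y : Fin 2 → ℝ => c * ((j : ℂ) / ((y 0 : ℝ) : ℂ) ^ 2))
      = fun y => (c * (j : ℂ)) * ((((y 0 : ℝ) : ℂ) ^ 2)⁻¹) := by
    funext y; ring
  rw [h]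
  exact ((diff_sq x).inv hne).const_mul _

lemma pd2_gfun (i : Fin 2) (c : ℂ) (j : ℝ) {x : Fin 2 → ℝ} (hx : x 0 ≠ 0) :
    pd2 i (fun y => c * ((j : ℂ) / ((y 0 : ℝ) : ℂ) ^ 2)) x
      = (if (0 : Fin 2) = i then 1 else 0) * (c * (-2 * (j : ℂ) / ((x 0 : ℝ) : ℂ) ^ 3)) := by
  have hx' : ((x 0 : ℝ) : ℂ) ≠ 0 := Complex.ofReal_ne_zero.mpr hx
  have hne : ((x 0 : ℝ) : ℂ) ^ 2 ≠ 0 := pow_ne_zero 2 hx'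
  have h : (fun y : Fin 2 → ℝ => c * ((j : ℂ) / ((y 0 : ℝ) : ℂ) ^ 2))
      = fun y => (c * (j : ℂ)) * ((((y 0 : ℝ) : ℂ) ^ 2)⁻¹) := by
    funext y; ring
  rw [h, pd2_const_mul i _ (f := fun y => (((y 0 : ℝ) : ℂ) ^ 2)⁻¹) ((diff_sq x).inv hne), pd2_invsq i hx]
  by_cases h0 : (0 : Fin 2) = i
  · subst h0
    simp only [if_pos rfl]
    field_simp
  · simp [h0]

end Helpers

theorem lambda_representation_commutators (ℏ j : ℝ) (hℏ : ℏ ≠ 0)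
    (φ : (Fin 2 → ℝ) → ℂ)
    (hφ : ContDiffOn ℝ (⊤ : ℕ∞) φ {x : Fin 2 → ℝ | x 0 ≠ 0}) :
    ∀ x : Fin 2 → ℝ, x 0 ≠ 0 →
      (Lop ℏ j 0 (Lop ℏ j 3 φ) x - Lop ℏ j 3 (Lop ℏ j 0 φ) x = -(Lop ℏ j 0 φ x)) ∧
      (Lop ℏ j 0 (Lop ℏ j 4 φ) x - Lop ℏ j 4 (Lop ℏ j 0 φ) x = Lop ℏ j 1 φ x) ∧
      (Lop ℏ j 1 (Lop ℏ j 2 φ) x - Lop ℏ j 2 (Lop ℏ j 1 φ) x = Lop ℏ j 0 φ x) ∧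
      (Lop ℏ j 1 (Lop ℏ j 3 φ) x - Lop ℏ j 3 (Lop ℏ j 1 φ) x = Lop ℏ j 1 φ x) ∧
      (Lop ℏ j 2 (Lop ℏ j 3 φ) x - Lop ℏ j 3 (Lop ℏ j 2 φ) x = -2 * Lop ℏ j 2 φ x) ∧
      (Lop ℏ j 2 (Lop ℏ j 4 φ) x - Lop ℏ j 4 (Lop ℏ j 2 φ) x = Lop ℏ j 3 φ x) ∧
      (Lop ℏ j 3 (Lop ℏ j 4 φ) x - Lop ℏ j 4 (Lop ℏ j 3 φ) x = -2 * Lop ℏ j 4 φ x) ∧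
      (Lop ℏ j 0 (Lop ℏ j 1 φ) x - Lop ℏ j 1 (Lop ℏ j 0 φ) x = 0) ∧
      (Lop ℏ j 0 (Lop ℏ j 2 φ) x - Lop ℏ j 2 (Lop ℏ j 0 φ) x = 0) ∧
      (Lop ℏ j 1 (Lop ℏ j 4 φ) x - Lop ℏ j 4 (Lop ℏ j 1 φ) x = 0) := by
  intro x hx
  have hopen : IsOpen {y : Fin 2 → ℝ | y 0 ≠ 0} :=
    isOpen_compl_singleton.preimage (continuous_apply 0)
  have hca : ContDiffAt ℝ (⊤ : ℕ∞) φ x := hφ.contDiffAt (hopen.mem_nhds hx)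
  have hdφ : DifferentiableAt ℝ φ x := hca.differentiableAt (by simp)
  have hfd : ContDiffAt ℝ 1 (fderiv ℝ φ) x := hca.fderiv_right (by exact WithTop.coe_le_coe.mpr le_top)
  have hdpd : ∀ k : Fin 2, DifferentiableAt ℝ (pd2 k φ) x := fun k =>
    (hfd.differentiableAt one_ne_zero).clm_apply (differentiableAt_const _)
  have hx' : ((x 0 : ℝ) : ℂ) ≠ 0 := Complex.ofReal_ne_zero.mpr hx
  have hℏ' : (ℏ : ℂ) ≠ 0 := Complex.ofReal_ne_zero.mpr hℏ
  have hcomm : ∀ i k : Fin 2, pd2 i (pd2 k φ) x = pd2 k (pd2 i φ) x := by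
    intro i k
    have hsymm := hca.isSymmSndFDerivAt (by rw [minSmoothness_of_isRCLikeNormedField]; exact WithTop.coe_le_coe.mpr le_top)
    have key : ∀ v w : Fin 2 → ℝ,
        fderiv ℝ (fun y => fderiv ℝ φ y w) x v = fderiv ℝ (fderiv ℝ φ) x v w := by
      intro v w
      rw [fderiv_clm_apply (hfd.differentiableAt one_ne_zero) (differentiableAt_const w)]
      simp
    show fderiv ℝ (fun y => fderiv ℝ φ y (Pi.single k 1)) x (Pi.single i 1)
        = fderiv ℝ (fun y => fderiv ℝ φ y (Pi.single i 1)) x (Pi.single k 1)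
    rw [key, key]
    exact hsymm _ _
  have hdg : DifferentiableAt ℝ
      (fun y : Fin 2 → ℝ => Complex.I / (ℏ:ℂ) * ((j : ℂ) / ((y 0 : ℝ) : ℂ) ^ 2)) x :=
    diff_gfun _ j hx
  refine ⟨?_, ?_, ?_, ?_, ?_, ?_, ?_, ?_, ?_, ?_⟩ <;> simp only [Lop]
  · -- [L0,L3] = -L0
    rw [pd2_cmul_coord_mul 0 (Complex.I / (ℏ:ℂ)) 0 hdφ,
      pd2_cmul_coord_mul 1 (Complex.I / (ℏ:ℂ)) 0 hdφ]
    norm_num; ring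
  · -- [L0,L4] = L1
    rw [pd2_cmul_coord_mul 0 (Complex.I / (ℏ:ℂ)) 0 hdφ]
    norm_num; ring
  · -- [L1,L2] = L0
    rw [pd2_neg_cmul_coord_mul 1 (Complex.I / (ℏ:ℂ)) 1 hdφ]
    norm_num; ring
  · -- [L1,L3] = L1
    rw [pd2_neg_cmul_coord_mul 0 (Complex.I / (ℏ:ℂ)) 1 hdφ,
      pd2_neg_cmul_coord_mul 1 (Complex.I / (ℏ:ℂ)) 1 hdφ]
    norm_num; ring
  · -- [L2,L3] = -2 L2
    rw [pd2_sub 1 (f := fun y => ((y 0 : ℝ) : ℂ) * pd2 0 φ y) (g := fun y => ((y 1 : ℝ) : ℂ) * pd2 1 φ y) ((diff_coord 0 x).mul (hdpd 0)) ((diff_coord 1 x).mul (hdpd 1)),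
      pd2_coord_mul 1 0 (hdpd 0), pd2_coord_mul 1 1 (hdpd 1),
      pd2_coord_mul 0 0 (hdpd 1), pd2_coord_mul 1 0 (hdpd 1),
      hcomm 1 0]
    norm_num; ring
  · -- [L2,L4] = L3
    rw [pd2_add 1 (f := fun y => ((y 1 : ℝ) : ℂ) * pd2 0 φ y) (g := fun y => Complex.I / (ℏ:ℂ) * ((j : ℂ) / ((y 0 : ℝ) : ℂ) ^ 2) * φ y) ((diff_coord 1 x).mul (hdpd 0)) (hdg.mul hdφ),
      pd2_coord_mul 1 1 (hdpd 0), pd2_mul 1 hdg hdφ, pd2_gfun 1 _ j hx,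
      pd2_coord_mul 0 0 (hdpd 1), hcomm 1 0]
    norm_num; ring
  · -- [L3,L4] = -2 L4
    rw [pd2_add 0 (f := fun y => ((y 1 : ℝ) : ℂ) * pd2 0 φ y) (g := fun y => Complex.I / (ℏ:ℂ) * ((j : ℂ) / ((y 0 : ℝ) : ℂ) ^ 2) * φ y) ((diff_coord 1 x).mul (hdpd 0)) (hdg.mul hdφ),
      pd2_add 1 (f := fun y => ((y 1 : ℝ) : ℂ) * pd2 0 φ y) (g := fun y => Complex.I / (ℏ:ℂ) * ((j : ℂ) / ((y 0 : ℝ) : ℂ) ^ 2) * φ y) ((diff_coord 1 x).mul (hdpd 0)) (hdg.mul hdφ),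
      pd2_coord_mul 0 1 (hdpd 0), pd2_coord_mul 1 1 (hdpd 0),
      pd2_mul 0 hdg hdφ, pd2_mul 1 hdg hdφ,
      pd2_gfun 0 _ j hx, pd2_gfun 1 _ j hx,
      pd2_sub 0 (f := fun y => ((y 0 : ℝ) : ℂ) * pd2 0 φ y) (g := fun y => ((y 1 : ℝ) : ℂ) * pd2 1 φ y) ((diff_coord 0 x).mul (hdpd 0)) ((diff_coord 1 x).mul (hdpd 1)),
      pd2_coord_mul 0 0 (hdpd 0), pd2_coord_mul 0 1 (hdpd 1),
      hcomm 1 0]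
    norm_num
    have hD : ((x 0 : ℝ) : ℂ) * (-2 * (j : ℂ) / ((x 0 : ℝ) : ℂ) ^ 3)
        = -2 * ((j : ℂ) / ((x 0 : ℝ) : ℂ) ^ 2) := by
      field_simp
    linear_combination (Complex.I / (ℏ:ℂ) * φ x) * hD
  · -- [L0,L1] = 0
    ring
  · -- [L0,L2] = 0
    rw [pd2_cmul_coord_mul 1 (Complex.I / (ℏ:ℂ)) 0 hdφ]
    norm_num; ring
  · -- [L1,L4] = 0
    rw [pd2_neg_cmul_coord_mul 0 (Complex.I / (ℏ:ℂ)) 1 hdφ]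
    norm_num; ring
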